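/- For 0 < q < 1, the von Neumann algebra generated by {a, a*, b, b*} coincides with B(ℓ²(ℕ)) ⊗̄ L(ℤ): inside the ring of bounded operators on ℓ²(ℕ × ℤ, ℂ), the double centralizer of {a, a*, b, b*} equals the double centralizer of the set {e_{ij} ⊗ S^n : i, j ∈ ℕ, n ∈ ℤ}, where a ξ_{n,k} = √(1 − q^{2n}) ξ_{n−1,k}, b ξ_{n,k} = q^n ξ_{n,k+1}, and e_{ij} ⊗ S^n sends ξ_{m,k} to δ_{j,m} ξ_{i,k+n}. -/

import Mathlib

noncomputable section

/-- The Hilbert space `ℓ²(ℕ × ℤ, ℂ)`. -/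
abbrev H : Type := lp (fun _ : ℕ × ℤ => ℂ) 2

/-- The canonical orthonormal basis vector `ξ_{n,k}` of `ℓ²(ℕ × ℤ, ℂ)`.
(The convention `ξ_{n,k} = 0` for `n < 0` is realized via truncated subtraction
on `ℕ` together with the vanishing coefficient `√(1 - q⁰) = 0`.) -/
def ξ (p : ℕ × ℤ) : H := lp.single 2 p 1

/-!
Both centralizers consist of the operators `T` with matrix
`⟨ξ_{m,l}, T ξ_{n,k}⟩ = δ_{mn} c(l - k)`, that is `T = 1 ⊗ L_c` for a Laurent operator `L_c`
on `ℓ²(ℤ)`.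

If `T` commutes with `b` and `b*`, it commutes with `b* b`, which is diagonal with pairwise
distinct eigenvalues `q^{2n}` on the rows `n`, so `T` maps each row to itself. Commuting with
`a`, whose weights `√(1 - q^{2n})` vanish only at `n = 0`, makes the blocks of all rows equal,
and commuting with `b` makes them Toeplitz. The matrix units `e_{ij} ⊗ S^n` force the same three
properties directly. Conversely `a`, `a*`, `b`, `b*` and `e_{ij} ⊗ S^n` all have the form
`W ⊗ S^s` for a weighted map `W` on `ℓ²(ℕ)`, and every such operator commutes with `1 ⊗ L_c`.
-/

open scoped ENNReal

namespace lp

variable {𝕜 ι κ E : Type*} [NormedField 𝕜] [NormedAddCommGroup E] [NormedSpace 𝕜 E]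
  {p : ℝ≥0∞} [Fact (1 ≤ p)]

theorem sum_norm_indicator_comp_rpow_le (hp : p ≠ ∞) {S : Set ι} {g : ι → κ}
    (hg : S.InjOn g) (v : lp (fun _ : κ => E) p) (s : Finset ι) :
    ∑ i ∈ s, ‖S.indicator (v ∘ g) i‖ ^ p.toReal ≤ ‖v‖ ^ p.toReal := by
  classical
  have hp' : 0 < p.toReal := ENNReal.toReal_pos (zero_lt_one.trans_le Fact.out).ne' hp
  calc ∑ i ∈ s, ‖S.indicator (v ∘ g) i‖ ^ p.toReal
      = ∑ i ∈ s with i ∈ S, ‖v (g i)‖ ^ p.toReal := by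
        rw [Finset.sum_filter]
        refine Finset.sum_congr rfl fun i _ => ?_
        by_cases hi : i ∈ S <;> simp [hi, Real.zero_rpow hp'.ne']
    _ = ∑ j ∈ (s.filter (· ∈ S)).image g, ‖v j‖ ^ p.toReal := by
        rw [Finset.sum_image fun i hi j hj => hg (Finset.mem_filter.1 hi).2
          (Finset.mem_filter.1 hj).2]
    _ ≤ ‖v‖ ^ p.toReal := lp.sum_rpow_le_norm_rpow hp' v _

def indicatorComp (hp : p ≠ ∞) (S : Set ι) (g : ι → κ) (hg : S.InjOn g) :
    lp (fun _ : κ => E) p →L[𝕜] lp (fun _ : ι => E) p :=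
  LinearMap.mkContinuous
    { toFun := fun v =>
        ⟨S.indicator (v ∘ g), memℓp_gen' (sum_norm_indicator_comp_rpow_le hp hg v)⟩
      map_add' := fun v w => by
        ext i
        exact congrFun (Set.indicator_add S (⇑v ∘ g) (⇑w ∘ g)) i
      map_smul' := fun c v => by
        ext i
        exact congrFun (Set.indicator_const_smul S c (⇑v ∘ g)) i }
    1 fun v => by
      have hp' : 0 < p.toReal := ENNReal.toReal_pos (zero_lt_one.trans_le Fact.out).ne' hp
      rw [one_mul]
      exact lp.norm_le_of_forall_sum_le hp' (norm_nonneg v)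
        (sum_norm_indicator_comp_rpow_le hp hg v)

end lp

open ContinuousLinearMap
open scoped InnerProductSpace ComplexConjugate

theorem ξ_apply (p r : ℕ × ℤ) : (ξ p : ℕ × ℤ → ℂ) r = if r = p then 1 else 0 := by
  simp [ξ, lp.single_apply, Pi.single_apply]

theorem inner_ξ_left (p : ℕ × ℤ) (v : H) : ⟪ξ p, v⟫_ℂ = v p := by
  simp [ξ, lp.inner_single_left]

theorem lp_single_eq_smul_ξ (p : ℕ × ℤ) (c : ℂ) : lp.single 2 p c = c • ξ p := by
  rw [ξ, ← lp.single_smul, smul_eq_mul, mul_one]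

theorem ext_ξ {U V : H →L[ℂ] H} (h : ∀ p, U (ξ p) = V (ξ p)) : U = V :=
  lp.ext_continuousLinearMap ENNReal.ofNat_ne_top fun p => ext_ring (h p)

theorem apply_eq_tsum_ξ (U : H →L[ℂ] H) (v : H) (r : ℕ × ℤ) :
    U v r = ∑' p, v p * U (ξ p) r := by
  have hv := (lp.hasSum_single ENNReal.ofNat_ne_top v).mapL ((innerSL ℂ (ξ r)).comp U)
  simpa [lp_single_eq_smul_ξ, inner_smul_right, inner_ξ_left] using hv.tsum_eq.symm

theorem apply_eq_mul_ξ_of_forall_ne (U : H →L[ℂ] H) (v : H) {r p₀ : ℕ × ℤ}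
    (h : ∀ p ≠ p₀, v p * U (ξ p) r = 0) : U v r = v p₀ * U (ξ p₀) r := by
  rw [apply_eq_tsum_ξ, tsum_eq_single p₀ h]

theorem adjoint_ξ_apply (U : H →L[ℂ] H) (p r : ℕ × ℤ) :
    adjoint U (ξ r) p = conj (U (ξ p) r) := by
  rw [← inner_ξ_left, adjoint_inner_right, ← inner_ξ_left, inner_conj_symm]

-- `U = W ⊗ S^s`, where `W` is the weighted map `ξ_n ↦ w n • ξ_{f n}` on `ℓ²(ℕ)`.
def IsTensorShift (U : H →L[ℂ] H) (w : ℕ → ℂ) (f : ℕ → ℕ) (s : ℤ) : Prop :=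
  ∀ n k, U (ξ (n, k)) = w n • ξ (f n, k + s)

namespace IsTensorShift

variable {U V T : H →L[ℂ] H} {w w' : ℕ → ℂ} {f f' : ℕ → ℕ} {s s' : ℤ}

theorem mul (hU : IsTensorShift U w f s) (hV : IsTensorShift V w' f' s') :
    IsTensorShift (U * V) (fun n => w' n * w (f' n)) (f ∘ f') (s' + s) := by
  intro n k
  rw [mul_apply_eq_comp, hV, map_smul, hU, smul_smul, add_assoc, Function.comp_apply]

theorem apply_ξ_apply (hU : IsTensorShift U w f s) (n : ℕ) (k : ℤ) (m : ℕ) (l : ℤ) :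
    U (ξ (n, k)) (m, l) = if m = f n ∧ l = k + s then w n else 0 := by
  simp [hU n k, ξ_apply]

theorem adjoint {g : ℕ → ℕ} (hU : IsTensorShift U w f s) (hfg : ∀ m, f (g m) = m)
    (hw : ∀ n, w n ≠ 0 → g (f n) = n) :
    IsTensorShift (adjoint U) (fun m => conj (w (g m))) g (-s) := by
  intro m l
  ext ⟨n, k⟩
  rw [adjoint_ξ_apply, hU.apply_ξ_apply, lp.coeFn_smul, Pi.smul_apply, ξ_apply, smul_eq_mul]
  by_cases hnk : (n, k) = (g m, l + -s)
  · obtain ⟨rfl, rfl⟩ := Prod.mk.inj hnk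
    simp [hfg]
  · rw [if_neg hnk, mul_zero]
    split_ifs with h
    · by_contra hne
      exact hnk (Prod.ext (by rw [h.1, hw n (by simpa using hne)]) (by simp; omega))
    · simp

theorem apply_eq (hU : IsTensorShift U w f s) {m n₀ : ℕ} (hm : f n₀ = m)
    (hw : ∀ n ≠ n₀, f n = m → w n = 0) (v : H) (l : ℤ) :
    U v (m, l) = w n₀ * v (n₀, l - s) := by
  rw [apply_eq_mul_ξ_of_forall_ne U v (p₀ := (n₀, l - s)), hU.apply_ξ_apply]
  · simp [hm, mul_comm]
  · rintro ⟨n, k⟩ hp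
    rw [hU.apply_ξ_apply]
    split_ifs with h
    · rw [hw n (by rintro rfl; exact hp (by simp [h.2])) h.1.symm, mul_zero]
    · rw [mul_zero]

theorem entry_eq_of_commute (hU : IsTensorShift U w f s) (hUT : Commute U T) {m n₀ : ℕ}
    (hm : f n₀ = m) (hw : ∀ n ≠ n₀, f n = m → w n = 0) (n : ℕ) (k l : ℤ) :
    w n₀ * T (ξ (n, k)) (n₀, l - s) = w n * T (ξ (f n, k + s)) (m, l) := by
  rw [← hU.apply_eq hm hw, ← mul_apply_eq_comp, hUT.eq, mul_apply_eq_comp, hU, map_smul]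
  rfl

end IsTensorShift

-- `T = 1 ⊗ L_c`, with `L_c` the Laurent operator with matrix `c(l - k)` on `ℓ²(ℤ)`.
def IsIdTensorLaurent (T : H →L[ℂ] H) (c : ℤ → ℂ) : Prop :=
  ∀ n k m l, T (ξ (n, k)) (m, l) = if m = n then c (l - k) else 0

theorem isIdTensorLaurent_of_entries {T : H →L[ℂ] H}
    (hoff : ∀ n k m l, m ≠ n → T (ξ (n, k)) (m, l) = 0)
    (hrow : ∀ m k l, T (ξ (m + 1, k)) (m + 1, l) = T (ξ (m, k)) (m, l))
    (hshift : ∀ k l, T (ξ (0, k + 1)) (0, l + 1) = T (ξ (0, k)) (0, l)) :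
    IsIdTensorLaurent T fun d => T (ξ (0, 0)) (0, d) := by
  have hdiag : ∀ m k l, T (ξ (m, k)) (m, l) = T (ξ (0, k)) (0, l) := by
    intro m k l
    induction m with
    | zero => rfl
    | succ m ih => rw [hrow, ih]
  have htoeplitz : ∀ k l, T (ξ (0, k)) (0, l) = T (ξ (0, 0)) (0, l - k) := by
    intro k l
    have hper : Function.Periodic (fun j => T (ξ (0, j)) (0, j + (l - k))) 1 := fun j => by
      simp only [add_right_comm j 1, hshift]
    simpa using hper.int_mul_eq k
  intro n k m l
  split_ifs with h
  · rw [h, hdiag, htoeplitz]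
  · exact hoff n k m l h

theorem IsIdTensorLaurent.commute {T U : H →L[ℂ] H} {c : ℤ → ℂ} {w : ℕ → ℂ} {f : ℕ → ℕ}
    {s : ℤ} (hT : IsIdTensorLaurent T c) (hU : IsTensorShift U w f s) : Commute U T := by
  refine ext_ξ fun ⟨n, k⟩ => ?_
  ext ⟨m, l⟩
  rw [mul_apply_eq_comp, mul_apply_eq_comp, hU n k, map_smul, lp.coeFn_smul, Pi.smul_apply, hT,
    apply_eq_mul_ξ_of_forall_ne U _ (p₀ := (n, l - s)), hT, hU.apply_ξ_apply]
  · by_cases hm : m = f n <;> simp [hm, sub_sub, add_comm, mul_comm]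
  · rintro ⟨n', k'⟩ hp
    rw [hT, hU.apply_ξ_apply]
    split_ifs with hn hk
    · exact absurd (by simp [hn, hk.2]) hp
    all_goals simp

theorem isIdTensorLaurent_of_commute {q : ℝ} (hq0 : 0 < q) (hq1 : q < 1) {a b T : H →L[ℂ] H}
    (ha : IsTensorShift a (fun n => (Real.sqrt (1 - q ^ (2 * n)) : ℂ)) (· - 1) 0)
    (hb : IsTensorShift b (fun n => ((q ^ n : ℝ) : ℂ)) id 1)
    (haT : Commute a T) (hbT : Commute b T) (hbT' : Commute (adjoint b) T) :
    IsIdTensorLaurent T fun d => T (ξ (0, 0)) (0, d) := by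
  have hbb := (hb.adjoint (g := id) (fun _ => rfl) (fun _ _ => rfl)).mul hb
  refine isIdTensorLaurent_of_entries (fun n k m l hmn => ?_) (fun m k l => ?_) (fun k l => ?_)
  · have hdiag : (q : ℂ) ^ m * (q : ℂ) ^ m = (q : ℂ) ^ n * (q : ℂ) ^ n ∨
        T (ξ (n, k)) (m, l) = 0 := by
      simpa using hbb.entry_eq_of_commute (hbT'.mul_left hbT) (n₀ := m) rfl
        (fun n hn h => absurd h hn) n k l
    refine hdiag.resolve_left fun h => hmn ?_
    have hq : (q * q) ^ m = (q * q) ^ n := by rw [mul_pow, mul_pow]; exact_mod_cast h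
    exact pow_right_injective₀ (by positivity) (by nlinarith) hq
  · have hrow := ha.entry_eq_of_commute haT (n₀ := m + 1) rfl
      (fun n hn h => by rw [show n = 0 by omega]; simp) (m + 1) k l
    have hw : (Real.sqrt (1 - q ^ (2 * (m + 1))) : ℂ) ≠ 0 :=
      Complex.ofReal_ne_zero.2 <| Real.sqrt_ne_zero'.2 <| sub_pos.2 <|
        pow_lt_one₀ hq0.le hq1 (by omega)
    simpa using mul_left_cancel₀ hw hrow
  · simpa using
      (hb.entry_eq_of_commute hbT (n₀ := 0) rfl (fun n hn h => absurd h hn) 0 k (l + 1)).symm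

theorem isTensorShift_of_apply_ξ_eq_ite {E : H →L[ℂ] H} {i j : ℕ} {n : ℤ}
    (hE : ∀ m k, E (ξ (m, k)) = if j = m then ξ (i, k + n) else 0) :
    IsTensorShift E (fun m => if j = m then 1 else 0) (fun _ => i) n := by
  intro m k
  by_cases h : j = m <;> simp [hE, h]

def matrixUnitShift (i j : ℕ) (n : ℤ) : H →L[ℂ] H :=
  lp.indicatorComp ENNReal.ofNat_ne_top {p | p.1 = i} (fun p => (j, p.2 - n))
    fun p hp p' hp' h => Prod.ext (hp.trans hp'.symm) (by simpa using h)

theorem matrixUnitShift_apply (i j : ℕ) (n : ℤ) (v : H) (r : ℕ × ℤ) :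
    matrixUnitShift i j n v r = {p : ℕ × ℤ | p.1 = i}.indicator (fun p => v (j, p.2 - n)) r :=
  rfl

theorem matrixUnitShift_ξ (i j : ℕ) (n : ℤ) (m : ℕ) (k : ℤ) :
    matrixUnitShift i j n (ξ (m, k)) = if j = m then ξ (i, k + n) else 0 := by
  ext ⟨m', l⟩
  rw [matrixUnitShift_apply]
  by_cases h : j = m <;> simp [Set.indicator_apply, ξ_apply, h, sub_eq_iff_eq_add, ite_and]

theorem isIdTensorLaurent_of_commute_matrixUnitShift {T : H →L[ℂ] H}
    (hT : ∀ i j n, Commute (matrixUnitShift i j n) T) :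
    IsIdTensorLaurent T fun d => T (ξ (0, 0)) (0, d) := by
  have hE i j n := isTensorShift_of_apply_ξ_eq_ite (matrixUnitShift_ξ i j n)
  have key i j n := (hE i j n).entry_eq_of_commute (hT i j n) (n₀ := j) rfl
    fun n' hn' _ => if_neg (Ne.symm hn')
  refine isIdTensorLaurent_of_entries (fun n k m l hmn => ?_) (fun m k l => ?_) (fun k l => ?_)
  · simpa [hmn] using key m m 0 n k l
  · simpa using (key (m + 1) m 0 m k l).symm
  · simpa using (key 0 0 1 0 k (l + 1)).symm

open ContinuousLinearMap in
/-- The von Neumann algebra generated by `{a, a*, b, b*}` coincides with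
`B(ℓ²(ℕ)) ⊗̄ L(ℤ)`: the double centralizer (bicommutant) of `{a, a*, b, b*}`
equals the double centralizer of the set of all `e_{ij} ⊗ S^n`. -/
theorem stmt_8 (q : ℝ) (hq0 : 0 < q) (hq1 : q < 1)
    (a b : H →L[ℂ] H)
    (ha : ∀ (n : ℕ) (k : ℤ),
      a (ξ (n, k)) = (Real.sqrt (1 - q ^ (2 * n)) : ℂ) • ξ (n - 1, k))
    (hb : ∀ (n : ℕ) (k : ℤ), b (ξ (n, k)) = ((q ^ n : ℝ) : ℂ) • ξ (n, k + 1)) :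
    Set.centralizer (Set.centralizer {a, adjoint a, b, adjoint b}) =
      Set.centralizer (Set.centralizer
        {T : H →L[ℂ] H | ∃ (i j : ℕ) (n : ℤ),
          ∀ (m : ℕ) (k : ℤ), T (ξ (m, k)) = if j = m then ξ (i, k + n) else 0}) := by
  have ha' : IsTensorShift a (fun n => (Real.sqrt (1 - q ^ (2 * n)) : ℂ)) (· - 1) 0 := by
    simpa [IsTensorShift] using ha
  have hb' : IsTensorShift b (fun n => ((q ^ n : ℝ) : ℂ)) id 1 := hb
  have ha'' := ha'.adjoint (g := (· + 1)) (fun _ => rfl) fun n hn =>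
    Nat.sub_add_cancel (Nat.pos_of_ne_zero fun h => hn (by simp [h]))
  have hb'' := hb'.adjoint (g := id) (fun _ => rfl) fun _ _ => rfl
  congr 1
  ext T
  constructor
  · rintro hT E ⟨i, j, n, hE⟩
    have hL := isIdTensorLaurent_of_commute hq0 hq1 ha' hb' (hT a (by simp)) (hT b (by simp))
      (hT (adjoint b) (by simp))
    exact hL.commute (isTensorShift_of_apply_ξ_eq_ite hE)
  · intro hT U hU
    have hL := isIdTensorLaurent_of_commute_matrixUnitShift fun i j n =>
      hT _ ⟨i, j, n, matrixUnitShift_ξ i j n⟩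
    rcases hU with rfl | rfl | rfl | rfl
    exacts [hL.commute ha', hL.commute ha'', hL.commute hb', hL.commute hb'']
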